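/- For any instance of the generalised travelling salesman problem with m clusters, the expected optimization time of the tour-based (1+1) EA is O(m! * m^{2m}). In particular, from any non-optimal cluster permutation, the probability that a single mutation step produces an optimal cluster permutation is at least (1/(e*(m-1)!)) * m^{-2m}. Hence the tour-based (1+1) EA is a fixed-parameter evolutionary algorithm for GTSP with respect to the number of clusters m. -/

import Mathlib

open scoped ENNReal BigOperators Classical

noncomputable section

/-- Probability that a (1+1) evolutionary algorithm with initial distribution `μ0` and
one-step transition kernel `K` follows the trajectory prefix `x 0, x 1, …, x t`. -/
def trajProb {State : Type*} (μ0 : State → ℝ≥0∞) (K : State → State → ℝ≥0∞)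
    {t : ℕ} (x : Fin (t + 1) → State) : ℝ≥0∞ :=
  μ0 (x 0) * ∏ i : Fin t, K (x i.castSucc) (x i.succ)

/-- `survival μ0 K Opt t` is the probability `P(T > t)` that no optimal state (w.r.t. the
goal predicate `Opt`) occurs among the first `t+1` states `X 0, …, X t` of the Markov chain
with initial distribution `μ0` and transition kernel `K`; here `T = inf {t | Opt (X t)}`
is the optimization time. -/
def survival {State : Type*} (μ0 : State → ℝ≥0∞) (K : State → State → ℝ≥0∞)
    (Opt : State → Prop) (t : ℕ) : ℝ≥0∞ :=
  ∑' x : Fin (t + 1) → State, if ∀ i, ¬ Opt (x i) then trajProb μ0 K x else 0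

/-- The expected optimization time `E[T] = ∑_{t ≥ 0} P(T > t)` of the Markov chain with
initial distribution `μ0` and transition kernel `K`, where `T = inf {t | Opt (X t)}`. -/
def expectedOptTime {State : Type*} (μ0 : State → ℝ≥0∞) (K : State → State → ℝ≥0∞)
    (Opt : State → Prop) : ℝ≥0∞ :=
  ∑' t : ℕ, survival μ0 K Opt t

/-- The one-step transition kernel of a (1+1) EA: from the current solution `x`, an
offspring `y` is sampled from the mutation distribution `mutate x`; it is accepted (i.e. the
chain moves to `y`) iff `cost y ≤ cost x`, otherwise the chain stays at `x`. -/
def eaKernel {State : Type*} (mutate : State → State → ℝ≥0∞) (cost : State → ℝ≥0∞)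
    (x y : State) : ℝ≥0∞ :=
  (if cost y ≤ cost x then mutate x y else 0) +
    (if y = x then ∑' z : State, (if cost z ≤ cost x then 0 else mutate x z) else 0)

/-- Mutation distribution of the cluster-based (1+1) EA with spanned nodes representation:
independently for each cluster `i`, with probability `1/m` the node chosen in cluster `i`
is replaced by a node drawn uniformly at random from `Vc i` (and is kept unchanged
otherwise). `clusterMut m Vc x y` is the probability that mutating `x` yields `y`. -/
def clusterMut (m : ℕ) {V : Type*} [DecidableEq V] (Vc : Fin m → Finset V)
    (x y : Fin m → V) : ℝ≥0∞ :=
  ∏ i : Fin m,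
    ((if y i ∈ Vc i then (m : ℝ≥0∞)⁻¹ * ((Vc i).card : ℝ≥0∞)⁻¹ else 0) +
      (if y i = x i then 1 - (m : ℝ≥0∞)⁻¹ else 0))

/-- The cost of the minimum spanning tree of the subgraph induced by the node selection
`x : Fin m → V` (one node per cluster), where `c` is the (symmetric, possibly infinite)
edge-cost function: the infimum over all trees `G` on the `m` clusters of the total cost
of the corresponding edges. -/
def mstCost {m : ℕ} {V : Type*} (c : V → V → ℝ≥0∞) (x : Fin m → V) : ℝ≥0∞ :=
  ⨅ (G : SimpleGraph (Fin m)) (_ : G.IsTree),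
    (∑ i : Fin m, ∑ j : Fin m, if G.Adj i j then c (x i) (x j) else 0) / 2


/-- The Poisson distribution with expectation `1`: `P(K = k) = exp(-1)/k!`. -/
def poisson1 (k : ℕ) : ℝ≥0∞ := ENNReal.ofReal (Real.exp (-1) / Nat.factorial k)
/-- The cyclic successor of a position/label `i` in `Fin m`: `(i + 1) mod m`. -/
def cyc {m : ℕ} (i : Fin m) : Fin m :=
  ⟨(i.val + 1) % m, Nat.mod_lt _ (Nat.lt_of_le_of_lt (Nat.zero_le i.val) i.isLt)⟩

/-- The jump operation on a list: the element at position `j` is removed and reinserted at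
position `k` (shifting the intermediate elements accordingly); if `j` is out of range the
list is unchanged. -/
def jumpList {α : Type*} (l : List α) (j k : ℕ) : List α :=
  match l[j]? with
  | none => l
  | some a => (l.eraseIdx j).insertIdx k a

/-- The jump operation on a permutation `π` of `Fin m`, viewed as the sequence
`π 0, …, π (m-1)`: the element at position `j` is removed and reinserted at position `k`. -/
def jumpFun {m : ℕ} (π : Fin m → Fin m) (j k : Fin m) : Fin m → Fin m :=
  fun i => (jumpList (List.ofFn π) j.val k.val).getD i.val (π i)

/-- The transition probability of a single jump operation in which the removed position `j`
and the reinsertion position `k` are chosen independently and uniformly at random. -/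
def jumpK (m : ℕ) (π σ : Fin m → Fin m) : ℝ≥0∞ :=
  ∑ j : Fin m, ∑ k : Fin m,
    (m : ℝ≥0∞)⁻¹ * (m : ℝ≥0∞)⁻¹ * (if σ = jumpFun π j k then 1 else 0)

/-- `k`-fold composition of the single-jump transition kernel. -/
def jumpKpow (m : ℕ) : ℕ → (Fin m → Fin m) → (Fin m → Fin m) → ℝ≥0∞
  | 0, π, σ => if σ = π then 1 else 0
  | k + 1, π, σ => ∑' τ : Fin m → Fin m, jumpKpow m k π τ * jumpK m τ σ

/-- Mutation distribution of the tour-based (1+1) EA: `K ~ 1 + Poisson(1)` jump operations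
are applied to the current cluster permutation. -/
def tourMut (m : ℕ) (π σ : Fin m → Fin m) : ℝ≥0∞ :=
  ∑' k : ℕ, poisson1 k * jumpKpow m (k + 1) π σ

/-- The lower-level value of a cluster permutation `π`: the minimum over node selections
`p i ∈ Vc i` of the cost of the Hamiltonian cycle visiting the selected nodes in the cyclic
order given by `π` (the lower-level problem is solved optimally). -/
def tourValue {V : Type*} (c : V → V → ℝ≥0∞) {m : ℕ} (Vc : Fin m → Finset V)
    (π : Fin m → Fin m) : ℝ≥0∞ :=
  ⨅ (p : Fin m → V) (_ : ∀ i, p i ∈ Vc i), ∑ i : Fin m, c (p (π i)) (p (π (cyc i)))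

/-- Optimal upper-level solutions of the GTSP: cluster permutations whose lower-level value
is globally minimal. -/
def OptTour {V : Type*} (c : V → V → ℝ≥0∞) {m : ℕ} (Vc : Fin m → Finset V)
    (π : Fin m → Fin m) : Prop :=
  Function.Bijective π ∧
    ∀ σ : Fin m → Fin m, Function.Bijective σ → tourValue c Vc π ≤ tourValue c Vc σ

/-!
Sorting one permutation into another by selection sort takes `m` jumps, each of which is the
required one with probability `m⁻²`; and `1 + Poisson(1)` equals `m` with probability
`1 / (e (m - 1)!)`. Hence from every cluster permutation the mutation hits a fixed optimal
permutation with probability at least `p = m^(-2m) / (e (m - 1)!)`, and the EA accepts it. As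
the EA only visits permutations, the optimization time is dominated by a geometric variable
with success probability `p`, whose mean is `p⁻¹ ≤ e m! m^(2m)`.
-/

open Function

lemma le_tsum_ite {S : Type*} {P : S → Prop} {f : S → ℝ≥0∞} {y : S} (hy : P y) :
    f y ≤ ∑' z, if P z then f z else 0 :=
  (if_pos hy).symm.le.trans (ENNReal.le_tsum (f := fun z => if P z then f z else 0) y)

lemma tsum_ite_not_le_one_sub {S : Type*} {P : S → Prop} {f : S → ℝ≥0∞} {p : ℝ≥0∞}
    (hf : ∑' y, f y ≤ 1) (hp : p ≤ ∑' y, if P y then f y else 0) :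
    ∑' y, (if ¬ P y then f y else 0) ≤ 1 - p := by
  have hsplit : ∑' y, (if ¬ P y then f y else 0) + ∑' y, (if P y then f y else 0) = ∑' y, f y := by
    rw [← ENNReal.tsum_add]
    exact tsum_congr fun y => by split_ifs <;> simp
  refine ENNReal.le_sub_of_add_le_right (ne_top_of_le_ne_top ENNReal.one_ne_top ?_) ?_
  · exact hp.trans ((ENNReal.tsum_le_tsum fun y => by split_ifs <;> simp).trans hf)
  · exact (add_le_add_right hp _).trans (hsplit.le.trans hf)

section Jump

variable {α : Type*}

lemma jumpList_of_lt {l : List α} {j : ℕ} (hj : j < l.length) (k : ℕ) :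
    jumpList l j k = (l.eraseIdx j).insertIdx k l[j] := by
  simp [jumpList, hj]

lemma length_jumpList {l : List α} (j : ℕ) {k : ℕ} (hk : k < l.length) :
    (jumpList l j k).length = l.length := by
  by_cases hj : j < l.length
  · rw [jumpList_of_lt hj, List.length_insertIdx_of_le_length (by grind),
      List.length_eraseIdx_of_lt hj]
    omega
  · simp [jumpList, hj]

lemma jumpList_perm (l : List α) (j : ℕ) {k : ℕ} (hk : k < l.length) :
    (jumpList l j k).Perm l := by
  by_cases hj : j < l.length
  · rw [jumpList_of_lt hj]
    exact (List.perm_insertIdx _ _ (by grind)).trans (List.getElem_cons_eraseIdx_perm hj)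
  · simp [jumpList, hj]

lemma getElem_jumpList_of_lt {l : List α} {i j k : ℕ} (hik : i < k) (hkj : k ≤ j)
    (hj : j < l.length) (h : i < (jumpList l j k).length) :
    (jumpList l j k)[i] = l[i] := by
  simp only [jumpList_of_lt hj]
  rw [List.getElem_insertIdx_of_lt hik, List.getElem_eraseIdx_of_lt _ (by omega)]

lemma getElem_jumpList_self {l : List α} {j k : ℕ} (hj : j < l.length)
    (h : k < (jumpList l j k).length) :
    (jumpList l j k)[k] = l[j] := by
  simp only [jumpList_of_lt hj]
  rw [List.getElem_insertIdx_self]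

variable {m : ℕ}

lemma jumpFun_eq_getElem (π : Fin m → Fin m) (j k i : Fin m) :
    jumpFun π j k i = (jumpList (List.ofFn π) j k)[(i : ℕ)]'(by
      rw [length_jumpList _ (by simp)]; simp) :=
  List.getD_eq_getElem _ _ _

lemma ofFn_jumpFun (π : Fin m → Fin m) (j k : Fin m) :
    List.ofFn (jumpFun π j k) = jumpList (List.ofFn π) j k :=
  List.ext_getElem (by rw [length_jumpList _ (by simp)]; simp) fun i _ _ => by
    rw [List.getElem_ofFn, jumpFun_eq_getElem]

lemma jumpFun_apply_of_lt (π : Fin m → Fin m) {i j k : Fin m} (hik : i < k) (hkj : k ≤ j) :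
    jumpFun π j k i = π i := by
  rw [jumpFun_eq_getElem, getElem_jumpList_of_lt hik hkj (by simp), List.getElem_ofFn]

lemma jumpFun_apply_self (π : Fin m → Fin m) (j k : Fin m) : jumpFun π j k k = π j := by
  rw [jumpFun_eq_getElem, getElem_jumpList_self (by simp), List.getElem_ofFn]

lemma Function.Bijective.jumpFun {π : Fin m → Fin m} (hπ : Bijective π) (j k : Fin m) :
    Bijective (jumpFun π j k) := by
  have hperm := jumpList_perm (List.ofFn π) j (k := k) (by simp)
  rw [← ofFn_jumpFun] at hperm
  exact Finite.injective_iff_bijective.mp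
    (List.nodup_ofFn.mp (hperm.nodup_iff.mpr (List.nodup_ofFn.mpr hπ.1)))

end Jump

section JumpKernel

variable {m : ℕ}

lemma inv_mul_inv_le_jumpK (π : Fin m → Fin m) (j k : Fin m) :
    (m : ℝ≥0∞)⁻¹ * (m : ℝ≥0∞)⁻¹ ≤ jumpK m π (jumpFun π j k) := by
  unfold jumpK
  refine le_trans ?_ (Finset.single_le_sum (fun _ _ => zero_le) (Finset.mem_univ j))
  refine le_trans ?_ (Finset.single_le_sum (fun _ _ => zero_le) (Finset.mem_univ k))
  simp

lemma exists_eq_jumpFun_of_jumpK_ne_zero {π σ : Fin m → Fin m} (h : jumpK m π σ ≠ 0) :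
    ∃ j k, σ = jumpFun π j k := by
  by_contra! hσ
  simp [jumpK, hσ] at h

lemma mul_jumpK_le_jumpKpow_succ (n : ℕ) (π τ σ : Fin m → Fin m) :
    jumpKpow m n π τ * jumpK m τ σ ≤ jumpKpow m (n + 1) π σ :=
  ENNReal.le_tsum (f := fun τ => jumpKpow m n π τ * jumpK m τ σ) τ

/-- Selection sort: the `n`-th jump moves `σ n` from its position `j ≥ n` to position `n`,
leaving the positions before `n` untouched. -/
lemma exists_eqOn_le_jumpKpow {π σ : Fin m → Fin m} (hπ : Bijective π) (hσ : Bijective σ) :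
    ∀ n ≤ m, ∃ τ, Bijective τ ∧ (∀ i : Fin m, (i : ℕ) < n → τ i = σ i) ∧
      ((m : ℝ≥0∞)⁻¹ * (m : ℝ≥0∞)⁻¹) ^ n ≤ jumpKpow m n π τ
  | 0, _ => ⟨π, hπ, by simp, by simp [jumpKpow]⟩
  | n + 1, hn => by
    obtain ⟨τ, hτ, hτσ, hle⟩ := exists_eqOn_le_jumpKpow hπ hσ n (by omega)
    let k : Fin m := ⟨n, by omega⟩
    obtain ⟨j, hj⟩ := hτ.2 (σ k)
    have hkj : k ≤ j := by
      by_contra! hjk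
      exact hjk.ne (hσ.1 ((hτσ j hjk).symm.trans hj))
    refine ⟨jumpFun τ j k, hτ.jumpFun j k, fun i hi => ?_, ?_⟩
    · rcases (Nat.lt_succ_iff_lt_or_eq.mp hi) with hik | hik
      · rw [jumpFun_apply_of_lt τ hik hkj, hτσ i hik]
      · rw [show i = k from Fin.ext hik, jumpFun_apply_self, hj]
    · calc ((m : ℝ≥0∞)⁻¹ * (m : ℝ≥0∞)⁻¹) ^ (n + 1)
          = ((m : ℝ≥0∞)⁻¹ * (m : ℝ≥0∞)⁻¹) ^ n * ((m : ℝ≥0∞)⁻¹ * (m : ℝ≥0∞)⁻¹) := pow_succ _ _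
        _ ≤ jumpKpow m n π τ * jumpK m τ (jumpFun τ j k) :=
          mul_le_mul' hle (inv_mul_inv_le_jumpK τ j k)
        _ ≤ jumpKpow m (n + 1) π (jumpFun τ j k) := mul_jumpK_le_jumpKpow_succ n π τ _

lemma inv_pow_le_jumpKpow {π σ : Fin m → Fin m} (hπ : Bijective π) (hσ : Bijective σ) :
    ((m : ℝ≥0∞) ^ (2 * m))⁻¹ ≤ jumpKpow m m π σ := by
  obtain ⟨τ, -, hτσ, hle⟩ := exists_eqOn_le_jumpKpow hπ hσ m le_rfl
  obtain rfl : τ = σ := funext fun i => hτσ i i.isLt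
  rwa [pow_mul, ENNReal.inv_pow, ENNReal.inv_pow, sq]

lemma Function.Bijective.of_jumpKpow_ne_zero {π σ : Fin m → Fin m} (hπ : Bijective π) :
    ∀ {n}, jumpKpow m n π σ ≠ 0 → Bijective σ
  | 0, h => by
    obtain rfl : σ = π := by by_contra hσ; simp [jumpKpow, hσ] at h
    exact hπ
  | n + 1, h => by
    obtain ⟨τ, hτ⟩ : ∃ τ, jumpKpow m n π τ * jumpK m τ σ ≠ 0 := by
      by_contra! hτ
      exact h (ENNReal.tsum_eq_zero.mpr hτ)
    obtain ⟨j, k, rfl⟩ := exists_eq_jumpFun_of_jumpK_ne_zero (right_ne_zero_of_mul hτ)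
    exact (hπ.of_jumpKpow_ne_zero (left_ne_zero_of_mul hτ)).jumpFun j k

end JumpKernel

section Mass

variable {m : ℕ}

lemma tsum_jumpK (hm : 1 ≤ m) (π : Fin m → Fin m) : ∑' σ, jumpK m π σ = 1 := by
  have hm1 : (m : ℝ≥0∞) * (m : ℝ≥0∞)⁻¹ = 1 :=
    ENNReal.mul_inv_cancel (by exact_mod_cast (by omega : m ≠ 0)) (ENNReal.natCast_ne_top m)
  simp only [tsum_fintype, jumpK, mul_ite, mul_one, mul_zero]
  rw [Finset.sum_comm]
  conv_lhs => enter [2, j]; rw [Finset.sum_comm]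
  simp only [Finset.sum_ite_eq', Finset.mem_univ, if_true, Finset.sum_const, Finset.card_univ,
    Fintype.card_fin, nsmul_eq_mul]
  rw [← mul_assoc, mul_mul_mul_comm, hm1, one_mul]

lemma tsum_jumpKpow (hm : 1 ≤ m) : ∀ (n : ℕ) (π : Fin m → Fin m), ∑' σ, jumpKpow m n π σ = 1
  | 0, π => by simp [jumpKpow]
  | n + 1, π => by
    simp only [jumpKpow]
    rw [ENNReal.tsum_comm]
    simp_rw [ENNReal.tsum_mul_left, tsum_jumpK hm, mul_one]
    exact tsum_jumpKpow hm n π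

lemma tsum_poisson1_le_one : ∑' k, poisson1 k ≤ 1 := by
  refine ENNReal.tsum_le_of_sum_range_le fun n => ?_
  calc ∑ k ∈ Finset.range n, poisson1 k
      = ENNReal.ofReal (Real.exp (-1) * ∑ k ∈ Finset.range n, (1 : ℝ) ^ k / k.factorial) := by
        rw [Finset.mul_sum, ENNReal.ofReal_sum_of_nonneg fun _ _ => by positivity]
        simp [poisson1, div_eq_mul_inv]
    _ ≤ ENNReal.ofReal (Real.exp (-1) * Real.exp 1) := by
        gcongr
        exact Real.sum_le_exp_of_nonneg zero_le_one n
    _ = 1 := by simp [← Real.exp_add]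

lemma tsum_tourMut_le_one (hm : 1 ≤ m) (π : Fin m → Fin m) : ∑' σ, tourMut m π σ ≤ 1 := by
  simp only [tourMut]
  rw [ENNReal.tsum_comm]
  simp_rw [ENNReal.tsum_mul_left, tsum_jumpKpow hm, mul_one]
  exact tsum_poisson1_le_one

end Mass

section TourMutation

variable {m : ℕ}

lemma poisson1_eq (k : ℕ) :
    poisson1 k = (ENNReal.ofReal (Real.exp 1))⁻¹ * ((k.factorial : ℕ) : ℝ≥0∞)⁻¹ := by
  rw [poisson1, ENNReal.ofReal_div_of_pos (by positivity), ENNReal.ofReal_natCast, div_eq_mul_inv,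
    Real.exp_neg, ENNReal.ofReal_inv_of_pos (Real.exp_pos 1)]

lemma le_tourMut (hm : 1 ≤ m) {π σ : Fin m → Fin m} (hπ : Bijective π) (hσ : Bijective σ) :
    (ENNReal.ofReal (Real.exp 1))⁻¹ * ((((m - 1).factorial : ℕ) : ℝ≥0∞))⁻¹ *
      ((m : ℝ≥0∞) ^ (2 * m))⁻¹ ≤ tourMut m π σ := by
  rw [← poisson1_eq]
  calc poisson1 (m - 1) * ((m : ℝ≥0∞) ^ (2 * m))⁻¹
      ≤ poisson1 (m - 1) * jumpKpow m (m - 1 + 1) π σ := by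
        rw [Nat.sub_add_cancel hm]
        exact mul_le_mul_right (inv_pow_le_jumpKpow hπ hσ) _
    _ ≤ tourMut m π σ := ENNReal.le_tsum (f := fun k => poisson1 k * jumpKpow m (k + 1) π σ) _

lemma Function.Bijective.of_tourMut_ne_zero {π σ : Fin m → Fin m} (hπ : Bijective π)
    (h : tourMut m π σ ≠ 0) : Bijective σ := by
  obtain ⟨k, hk⟩ : ∃ k, poisson1 k * jumpKpow m (k + 1) π σ ≠ 0 := by
    by_contra! hk
    exact h (ENNReal.tsum_eq_zero.mpr hk)
  exact hπ.of_jumpKpow_ne_zero (right_ne_zero_of_mul hk)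

end TourMutation

section EAKernel

variable {S : Type*} (mutate : S → S → ℝ≥0∞) (cost : S → ℝ≥0∞)

lemma le_eaKernel {x y : S} (h : cost y ≤ cost x) : mutate x y ≤ eaKernel mutate cost x y := by
  rw [eaKernel, if_pos h]
  exact le_self_add

lemma eaKernel_ne_zero {x y : S} (h : eaKernel mutate cost x y ≠ 0) : y = x ∨ mutate x y ≠ 0 := by
  by_contra! hxy
  simp [eaKernel, hxy] at h

lemma tsum_eaKernel_le_one {x : S} (h : ∑' y, mutate x y ≤ 1) :
    ∑' y, eaKernel mutate cost x y ≤ 1 := by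
  calc ∑' y, eaKernel mutate cost x y
      = ∑' y, ((if cost y ≤ cost x then mutate x y else 0) +
          (if cost y ≤ cost x then 0 else mutate x y)) := by
        simp only [eaKernel, ENNReal.tsum_add, tsum_ite_eq]
    _ = ∑' y, mutate x y := tsum_congr fun y => by split_ifs <;> simp
    _ ≤ 1 := h

end EAKernel

section MarkovChain

variable {S : Type*} (μ0 : S → ℝ≥0∞) (K : S → S → ℝ≥0∞) (Opt : S → Prop)

lemma trajProb_snoc {t : ℕ} (x : Fin (t + 1) → S) (a : S) :
    trajProb μ0 K (Fin.snoc x a : Fin (t + 2) → S) = trajProb μ0 K x * K (x (Fin.last t)) a := by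
  simp only [trajProb, Fin.prod_univ_castSucc, Fin.succ_castSucc, Fin.succ_last,
    Fin.snoc_castSucc, Fin.snoc_last, ← Fin.castSucc_zero (n := t + 1)]
  ring

variable {μ0 K} in
lemma forall_of_trajProb_ne_zero {Good : S → Prop} (hμ : ∀ x, μ0 x ≠ 0 → Good x)
    (hK : ∀ x y, Good x → K x y ≠ 0 → Good y) {t : ℕ} {x : Fin (t + 1) → S}
    (h : trajProb μ0 K x ≠ 0) : ∀ i, Good (x i) := by
  have hK0 : ∀ i : Fin t, K (x i.castSucc) (x i.succ) ≠ 0 := fun i hi =>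
    h (mul_eq_zero_of_right _ (Finset.prod_eq_zero (Finset.mem_univ i) hi))
  intro i
  induction i using Fin.induction with
  | zero => exact hμ _ (left_ne_zero_of_mul h)
  | succ i ih => exact hK _ _ ih (hK0 i)

lemma survival_succ_le {Good : S → Prop} (hμ : ∀ x, μ0 x ≠ 0 → Good x)
    (hK : ∀ x y, Good x → K x y ≠ 0 → Good y) {p : ℝ≥0∞}
    (hstep : ∀ x, Good x → ¬ Opt x → ∑' y, (if ¬ Opt y then K x y else 0) ≤ 1 - p) (t : ℕ) :
    survival μ0 K Opt (t + 1) ≤ (1 - p) * survival μ0 K Opt t := by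
  rw [survival, ← (Fin.snocEquiv fun _ => S).tsum_eq, ENNReal.tsum_prod', ENNReal.tsum_comm,
    survival, ← ENNReal.tsum_mul_left]
  refine ENNReal.tsum_le_tsum fun x => ?_
  have hsnoc : ∀ a, Fin.snocEquiv (fun _ => S) (a, x) = Fin.snoc x a := fun _ => rfl
  have hopt : ∀ a, (∀ i, ¬ Opt (Fin.snoc x a i : S)) ↔ (∀ i, ¬ Opt (x i)) ∧ ¬ Opt a := fun a => by
    rw [Fin.forall_fin_succ']
    simp only [Fin.snoc_castSucc, Fin.snoc_last]
  simp only [hsnoc, hopt, trajProb_snoc]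
  by_cases hx : (∀ i, ¬ Opt (x i)) ∧ trajProb μ0 K x ≠ 0
  · obtain ⟨hx, hx0⟩ := hx
    have hlast := forall_of_trajProb_ne_zero hμ hK hx0 (Fin.last t)
    calc ∑' a, (if (∀ i, ¬ Opt (x i)) ∧ ¬ Opt a then trajProb μ0 K x * K (x (Fin.last t)) a
          else 0)
        = trajProb μ0 K x * ∑' a, (if ¬ Opt a then K (x (Fin.last t)) a else 0) := by
          rw [← ENNReal.tsum_mul_left]
          exact tsum_congr fun a => by simp [hx, mul_ite]
      _ ≤ trajProb μ0 K x * (1 - p) := mul_le_mul_right (hstep _ hlast (hx _)) _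
      _ = (1 - p) * if ∀ i, ¬ Opt (x i) then trajProb μ0 K x else 0 := by rw [if_pos hx, mul_comm]
  · rw [not_and_or, not_not] at hx
    rcases hx with hx | hx <;> simp [hx]

lemma survival_zero_le_one (hμ0 : ∑' x, μ0 x ≤ 1) : survival μ0 K Opt 0 ≤ 1 := by
  calc survival μ0 K Opt 0 ≤ ∑' x : Fin 1 → S, μ0 (x 0) :=
        ENNReal.tsum_le_tsum fun x => by split_ifs <;> simp [trajProb]
    _ = ∑' x, μ0 x := (Equiv.funUnique (Fin 1) S).tsum_eq μ0
    _ ≤ 1 := hμ0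

theorem expectedOptTime_le_inv {Good : S → Prop} (hμ0 : ∑' x, μ0 x ≤ 1)
    (hμ : ∀ x, μ0 x ≠ 0 → Good x) (hK : ∀ x y, Good x → K x y ≠ 0 → Good y)
    (hK1 : ∀ x, Good x → ∑' y, K x y ≤ 1) {p : ℝ≥0∞} (hp : p ≤ 1)
    (hsucc : ∀ x, Good x → ¬ Opt x → p ≤ ∑' y, if Opt y then K x y else 0) :
    expectedOptTime μ0 K Opt ≤ p⁻¹ := by
  have hstep : ∀ x, Good x → ¬ Opt x → ∑' y, (if ¬ Opt y then K x y else 0) ≤ 1 - p :=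
    fun x hx hxo => tsum_ite_not_le_one_sub (hK1 x hx) (hsucc x hx hxo)
  have hsurv : ∀ t, survival μ0 K Opt t ≤ (1 - p) ^ t := fun t => by
    induction t with
    | zero => simpa using survival_zero_le_one μ0 K Opt hμ0
    | succ t ih =>
      calc survival μ0 K Opt (t + 1) ≤ (1 - p) * survival μ0 K Opt t :=
            survival_succ_le μ0 K Opt hμ hK hstep t
        _ ≤ (1 - p) * (1 - p) ^ t := mul_le_mul_right ih _
        _ = (1 - p) ^ (t + 1) := (pow_succ' _ _).symm
  calc expectedOptTime μ0 K Opt ≤ ∑' t : ℕ, (1 - p) ^ t := ENNReal.tsum_le_tsum hsurv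
    _ = p⁻¹ := by rw [ENNReal.tsum_geometric, ENNReal.sub_sub_cancel ENNReal.one_ne_top hp]

end MarkovChain

lemma exists_optTour {V : Type*} (c : V → V → ℝ≥0∞) {m : ℕ} (Vc : Fin m → Finset V) :
    ∃ σ, OptTour c Vc σ := by
  obtain ⟨σ, hσ, hmin⟩ := (Finset.univ.filter fun σ : Fin m → Fin m => Bijective σ).exists_min_image
    (tourValue c Vc) ⟨id, Finset.mem_filter.mpr ⟨Finset.mem_univ _, bijective_id⟩⟩
  exact ⟨σ, (Finset.mem_filter.mp hσ).2, fun τ hτ => hmin τ (by simpa using hτ)⟩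

lemma inv_le_exp_mul_factorial_mul_pow (m : ℕ) :
    ((ENNReal.ofReal (Real.exp 1))⁻¹ * ((((m - 1).factorial : ℕ) : ℝ≥0∞))⁻¹ *
      ((m : ℝ≥0∞) ^ (2 * m))⁻¹)⁻¹ ≤
      ENNReal.ofReal (Real.exp 1) * ((m.factorial : ℕ) : ℝ≥0∞) * (m : ℝ≥0∞) ^ (2 * m) := by
  rw [ENNReal.inv_le_iff_inv_le, ENNReal.mul_inv (by simp) (by simp),
    ENNReal.mul_inv (by simp) (by simp)]
  gcongr
  exact Nat.sub_le m 1

theorem tourEA_upper_bound_general (m : ℕ) (hm : 1 ≤ m) {V : Type}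
    (Vc : Fin m → Finset V)
    (c : V → V → ℝ≥0∞)
    (μ0 : (Fin m → Fin m) → ℝ≥0∞)
    (hμ0 : ∑' π, μ0 π = 1)
    (hsupp : ∀ π, μ0 π ≠ 0 → Function.Bijective π) :
    (∀ π : Fin m → Fin m, Function.Bijective π → ¬ OptTour c Vc π →
        (ENNReal.ofReal (Real.exp 1))⁻¹ * ((((m - 1).factorial : ℕ) : ℝ≥0∞))⁻¹ *
            ((m : ℝ≥0∞) ^ (2 * m))⁻¹ ≤
          ∑' σ : Fin m → Fin m, if OptTour c Vc σ then tourMut m π σ else 0) ∧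
    expectedOptTime μ0 (eaKernel (tourMut m) (tourValue c Vc)) (OptTour c Vc) ≤
      ENNReal.ofReal (Real.exp 1) * ((m.factorial : ℕ) : ℝ≥0∞) * (m : ℝ≥0∞) ^ (2 * m) := by
  obtain ⟨σ, hσ⟩ := exists_optTour c Vc
  refine ⟨fun π hπ _ => (le_tourMut hm hπ hσ.1).trans (le_tsum_ite hσ), ?_⟩
  refine (expectedOptTime_le_inv _ _ _ hμ0.le hsupp ?_ ?_ ?_ ?_).trans
    (inv_le_exp_mul_factorial_mul_pow m)
  · intro π τ hπ h
    rcases eaKernel_ne_zero _ _ h with rfl | h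
    exacts [hπ, hπ.of_tourMut_ne_zero h]
  · exact fun π _ => tsum_eaKernel_le_one _ _ (tsum_tourMut_le_one hm π)
  · exact (le_tourMut hm hσ.1 hσ.1).trans ((ENNReal.le_tsum σ).trans (tsum_tourMut_le_one hm σ))
  · exact fun π hπ _ => ((le_tourMut hm hπ hσ.1).trans (le_eaKernel _ _ (hσ.2 π hπ))).trans
      (le_tsum_ite hσ)

/-- For any instance of the generalised travelling salesman problem with `m`
clusters, the tour-based (1+1) EA (global structure representation) satisfies: from any
non-optimal cluster permutation, the probability that a single mutation step produces an
optimal cluster permutation is at least `(1/(e*(m-1)!)) * m^{-2m}`; consequently, for any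
initial distribution over cluster permutations, the expected optimization time is at most
`e * m! * m^{2m}` (hence `O(m! * m^{2m})`, so the tour-based (1+1) EA is a fixed-parameter
evolutionary algorithm for GTSP w.r.t. the number of clusters `m`). -/
theorem tourEA_upper_bound (m : ℕ) (hm : 1 ≤ m) {V : Type} [Fintype V] [DecidableEq V]
    (Vc : Fin m → Finset V)
    (hne : ∀ i, (Vc i).Nonempty)
    (hdisj : ∀ i j, i ≠ j → Disjoint (Vc i) (Vc j))
    (hcover : ∀ v : V, ∃ i, v ∈ Vc i)
    (c : V → V → ℝ≥0∞)
    (hsym : ∀ a b, c a b = c b a)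
    (hpos : ∀ a b, a ≠ b → 0 < c a b)
    (μ0 : (Fin m → Fin m) → ℝ≥0∞)
    (hμ0 : ∑' π, μ0 π = 1)
    (hsupp : ∀ π, μ0 π ≠ 0 → Function.Bijective π) :
    (∀ π : Fin m → Fin m, Function.Bijective π → ¬ OptTour c Vc π →
        (ENNReal.ofReal (Real.exp 1))⁻¹ * ((((m - 1).factorial : ℕ) : ℝ≥0∞))⁻¹ *
            ((m : ℝ≥0∞) ^ (2 * m))⁻¹ ≤
          ∑' σ : Fin m → Fin m, if OptTour c Vc σ then tourMut m π σ else 0) ∧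
    expectedOptTime μ0 (eaKernel (tourMut m) (tourValue c Vc)) (OptTour c Vc) ≤
      ENNReal.ofReal (Real.exp 1) * ((m.factorial : ℕ) : ℝ≥0∞) * (m : ℝ≥0∞) ^ (2 * m) :=
  tourEA_upper_bound_general m hm Vc c μ0 hμ0 hsupp
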